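/- Let F = (A, att) be an argumentation framework and let S ⊆ A be a set of arguments such that every s ∈ S is attacked by some unattacked argument of F. Let F' = (A \ S, att') be the restriction of F to A \ S. Then E is a preferred extension of F (a ⊆-maximal complete extension of F) if and only if E is a preferred extension of F'. -/
import Mathlib


/-- A set `S` is conflict-free in the AF `(A, att)`. -/
def ConflictFree {α : Type*} (A : Set α) (att : α → α → Prop) (S : Set α) : Prop :=
  S ⊆ A ∧ ∀ a ∈ S, ∀ b ∈ S, ¬ att a b

/-- `S` defends argument `c` in the AF `(A, att)`. -/
def Defends {α : Type*} (A : Set α) (att : α → α → Prop) (S : Set α) (c : α) : Prop :=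
  ∀ b ∈ A, att b c → ∃ a ∈ S, att a b

/-- `S` is admissible in the AF `(A, att)`. -/
def Admissible {α : Type*} (A : Set α) (att : α → α → Prop) (S : Set α) : Prop :=
  ConflictFree A att S ∧ ∀ c ∈ S, Defends A att S c

/-- `S` is a complete extension of the AF `(A, att)`. -/
def CompleteExt {α : Type*} (A : Set α) (att : α → α → Prop) (S : Set α) : Prop :=
  Admissible A att S ∧ ∀ c ∈ A, Defends A att S c → c ∈ S

/-- `S` is a stable extension of the AF `(A, att)`. -/
def StableExt {α : Type*} (A : Set α) (att : α → α → Prop) (S : Set α) : Prop :=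
  ConflictFree A att S ∧ ∀ b ∈ A, b ∉ S → ∃ a ∈ S, att a b

/-- `G` is a grounded extension of the AF `(A, att)`: a complete extension
contained in every complete extension. -/
def GroundedExt {α : Type*} (A : Set α) (att : α → α → Prop) (G : Set α) : Prop :=
  CompleteExt A att G ∧ ∀ E, CompleteExt A att E → G ⊆ E

/-- `E` is a preferred extension of the AF `(A, att)`: a ⊆-maximal complete extension. -/
def PreferredExt {α : Type*} (A : Set α) (att : α → α → Prop) (E : Set α) : Prop :=
  CompleteExt A att E ∧ ∀ E', CompleteExt A att E' → E ⊆ E' → E' = E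

/-- Argument `c` is unattacked in the AF `(A, att)`. -/
def Unattacked {α : Type*} (A : Set α) (att : α → α → Prop) (c : α) : Prop :=
  ∀ b ∈ A, ¬ att b c

/-- Every unattacked argument belongs to every complete extension. -/
lemma unattacked_mem_complete {α : Type*} {A : Set α} {att : α → α → Prop}
    {E : Set α} (hE : CompleteExt A att E) {c : α} (hc : c ∈ A)
    (hu : Unattacked A att c) : c ∈ E := by
  exact hE.2 c hc (fun b hb hatt => absurd hatt (hu b hb))

/-- Removing arguments attacked by unattacked arguments preserves the complete
extensions. -/
lemma complete_restriction {α : Type*} (A : Set α) (att : α → α → Prop)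
    (S : Set α) (hS : S ⊆ A)
    (hSatt : ∀ s ∈ S, ∃ c ∈ A, att c s ∧ Unattacked A att c)
    (att' : α → α → Prop)
    (hatt' : ∀ a b, att' a b ↔ (a ∈ A \ S ∧ b ∈ A \ S ∧ att a b))
    (E : Set α) : CompleteExt A att E ↔ CompleteExt (A \ S) att' E := by
  constructor
  · intro hE
    -- E ∩ S = ∅
    have hdisj : ∀ e ∈ E, e ∉ S := by
      intro e he hes
      obtain ⟨c, hcA, hcatt, hcu⟩ := hSatt e hes
      obtain ⟨a, haE, ha⟩ := hE.1.2 e he c hcA hcatt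
      exact hcu a (hE.1.1.1 haE) ha
    have hsub : E ⊆ A \ S := fun e he => ⟨hE.1.1.1 he, hdisj e he⟩
    refine ⟨⟨⟨hsub, ?_⟩, ?_⟩, ?_⟩
    · intro a ha b hb hab
      exact hE.1.1.2 a ha b hb ((hatt' a b).mp hab).2.2
    · intro e he b hb hab
      obtain ⟨a, haE, ha⟩ := hE.1.2 e he b hb.1 ((hatt' b e).mp hab).2.2
      exact ⟨a, haE, (hatt' a b).mpr ⟨hsub haE, hb, ha⟩⟩
    · intro c hc hdef
      refine hE.2 c hc.1 ?_
      intro b hb hbc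
      by_cases hbS : b ∈ S
      · obtain ⟨d, hdA, hdatt, hdu⟩ := hSatt b hbS
        exact ⟨d, unattacked_mem_complete hE hdA hdu, hdatt⟩
      · obtain ⟨a, haE, ha⟩ := hdef b ⟨hb, hbS⟩ ((hatt' b c).mpr ⟨⟨hb, hbS⟩, hc, hbc⟩)
        exact ⟨a, haE, ((hatt' a b).mp ha).2.2⟩
  · intro hE
    have hsub : E ⊆ A \ S := hE.1.1.1
    -- unattacked arguments (in A) are in E
    have hun : ∀ c ∈ A, Unattacked A att c → c ∈ E := by
      intro c hc hu
      have hcS : c ∉ S := by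
        intro hcs
        obtain ⟨d, hdA, hdatt, _⟩ := hSatt c hcs
        exact hu d hdA hdatt
      exact unattacked_mem_complete hE ⟨hc, hcS⟩
        (fun b hb hab => (hu b hb.1) ((hatt' b c).mp hab).2.2)
    have hdefF : ∀ e ∈ E, Defends A att E e := by
      intro e he b hb hbe
      by_cases hbS : b ∈ S
      · obtain ⟨d, hdA, hdatt, hdu⟩ := hSatt b hbS
        exact ⟨d, hun d hdA hdu, hdatt⟩
      · obtain ⟨a, haE, ha⟩ := hE.1.2 e he b ⟨hb, hbS⟩
          ((hatt' b e).mpr ⟨⟨hb, hbS⟩, hsub he, hbe⟩)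
        exact ⟨a, haE, ((hatt' a b).mp ha).2.2⟩
    refine ⟨⟨⟨fun e he => (hsub he).1, ?_⟩, hdefF⟩, ?_⟩
    · intro a ha b hb hab
      exact hE.1.1.2 a ha b hb ((hatt' a b).mpr ⟨hsub ha, hsub hb, hab⟩)
    · intro c hc hdef
      have hcS : c ∉ S := by
        intro hcs
        obtain ⟨d, hdA, hdatt, hdu⟩ := hSatt c hcs
        obtain ⟨a, haE, ha⟩ := hdef d hdA hdatt
        exact hdu a (hsub haE).1 ha
      refine hE.2 c ⟨hc, hcS⟩ ?_
      intro b hb hbc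
      obtain ⟨a, haE, ha⟩ := hdef b hb.1 ((hatt' b c).mp hbc).2.2
      exact ⟨a, haE, (hatt' a b).mpr ⟨hsub haE, hb, ha⟩⟩

/-- Removing arguments attacked by unattacked arguments preserves the preferred
extensions. -/
theorem preferred_restriction {α : Type*} (A : Set α) (att : α → α → Prop)
    (S : Set α) (hS : S ⊆ A)
    (hSatt : ∀ s ∈ S, ∃ c ∈ A, att c s ∧ Unattacked A att c)
    (att' : α → α → Prop)
    (hatt' : ∀ a b, att' a b ↔ (a ∈ A \ S ∧ b ∈ A \ S ∧ att a b))
    (E : Set α) : PreferredExt A att E ↔ PreferredExt (A \ S) att' E := by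
  unfold PreferredExt
  constructor
  · rintro ⟨h1, h2⟩
    exact ⟨(complete_restriction A att S hS hSatt att' hatt' E).mp h1,
      fun E' hE' hEE' =>
        h2 E' ((complete_restriction A att S hS hSatt att' hatt' E').mpr hE') hEE'⟩
  · rintro ⟨h1, h2⟩
    exact ⟨(complete_restriction A att S hS hSatt att' hatt' E).mpr h1,
      fun E' hE' hEE' =>
        h2 E' ((complete_restriction A att S hS hSatt att' hatt' E').mp hE') hEE'⟩
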